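/- Let D be an n×n matrix with ΓD = D^H Γ for unitary Hermitian Γ, and let P be a full-column-rank matrix with ΓP = PΓ_c for a unitary Hermitian Γ_c. Set R = (ΓP)^H and assume RDP is invertible. Then the Petrov-Galerkin coarse correction equals the Galerkin one: P(RDP)^{-1}R = P(P^H D P)^{-1}P^H. -/
import Mathlib


open Matrix

theorem petrov_galerkin_eq_galerkin_correction
    {n m : ℕ} (D Γ : Matrix (Fin n) (Fin n) ℂ)
    (P : Matrix (Fin n) (Fin m) ℂ) (Γc : Matrix (Fin m) (Fin m) ℂ)
    (hΓu : Γᴴ * Γ = 1) (hΓ2 : Γ * Γ = 1)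
    (hΓcu : Γcᴴ * Γc = 1) (hΓc2 : Γc * Γc = 1)
    (hsym : Γ * D = Dᴴ * Γ)
    (hstruct : Γ * P = P * Γc)
    (hrank : P.rank = m)
    (hinv : IsUnit ((Γ * P)ᴴ * D * P)) :
    P * ((Γ * P)ᴴ * D * P)⁻¹ * (Γ * P)ᴴ = P * (Pᴴ * D * P)⁻¹ * Pᴴ := by
  have hΓH : Γᴴ = Γ := by
    calc Γᴴ = Γᴴ * (Γ * Γ) := by rw [hΓ2, mul_one]
    _ = (Γᴴ * Γ) * Γ := by rw [mul_assoc]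
    _ = Γ := by rw [hΓu, one_mul]
  have hΓcH : Γcᴴ = Γc := by
    calc Γcᴴ = Γcᴴ * (Γc * Γc) := by rw [hΓc2, mul_one]
    _ = (Γcᴴ * Γc) * Γc := by rw [mul_assoc]
    _ = Γc := by rw [hΓcu, one_mul]
  have hR : (Γ * P)ᴴ = Γc * Pᴴ := by
    have := congrArg conjTranspose hstruct
    simp only [conjTranspose_mul, hΓH, hΓcH] at this
    rw [conjTranspose_mul, hΓH, this]
  have hΓcinv : Γc⁻¹ = Γc := Matrix.inv_eq_right_inv hΓc2
  rw [hR]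
  have hM : Γc * Pᴴ * D * P = Γc * (Pᴴ * D * P) := by
    simp only [Matrix.mul_assoc]
  rw [hM, Matrix.mul_inv_rev, hΓcinv]
  calc P * ((Pᴴ * D * P)⁻¹ * Γc) * (Γc * Pᴴ)
      = P * (Pᴴ * D * P)⁻¹ * ((Γc * Γc) * Pᴴ) := by
        simp only [Matrix.mul_assoc]
    _ = P * (Pᴴ * D * P)⁻¹ * Pᴴ := by rw [hΓc2, Matrix.one_mul]
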